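/- arXiv:2212.01069 — 6 statements merged into one kernel-verified Lean document; each statement's English description precedes it below -/
import Mathlib

section
/- Let n be an odd positive integer and let q^{1/2} be a primitive n-th root of -1 (so (q^{1/2})^n = -1 and q = (q^{1/2})^2 is a primitive n-th root of unity). For any integer k, the absolute value of the sum ∑_{t=0}^{n-1} (-q^{1/2})^{k t^2} equals √(gcd(k,n)·n). -/
open Complex Finset

/-!
Since `n` is odd, `-ζ = ζ ^ (n + 1)` is a primitive `n`-th root of unity, so the sum is
`S = ∑_{x : ZMod n} ψ (k x²)` for a primitive additive character `ψ`. In `S · conj S`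
substitute `x = y + u`: the sum over `y` of `ψ (2 k u y)` vanishes unless `k u = 0`
(`2` is a unit mod `n`), and then `ψ (k u²) = 1`.
Hence `‖S‖² = n · #{u | k u = 0} = n · gcd(k, n)`.
-/

theorem IsPrimitiveRoot.neg_of_odd {R : Type*} [CommRing R] [IsDomain R] {ζ : R} {n : ℕ}
    (hn : Odd n) (h : IsPrimitiveRoot ζ (2 * n)) : IsPrimitiveRoot (-ζ) n := by
  obtain ⟨c, rfl⟩ := hn
  have hsq : IsPrimitiveRoot (ζ ^ 2) (2 * c + 1) := by
    simpa using h.pow_of_dvd two_ne_zero (dvd_mul_right 2 _)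
  have hneg : ζ ^ (2 * c + 1) = -1 :=
    (by simpa using h.pow_of_dvd (by omega) (dvd_mul_left _ 2) : IsPrimitiveRoot _ 2)
      |>.eq_neg_one_of_two_right
  have hc : (c + 1).Coprime (2 * c + 1) := by
    rw [show 2 * c + 1 = c + (c + 1) by ring]
    simp
  convert hsq.pow_of_coprime (c + 1) hc using 1
  rw [← pow_mul, show 2 * (c + 1) = (2 * c + 1) + 1 by ring, pow_succ, hneg, neg_one_mul]

theorem ZMod.sum_range_natCast {M : Type*} [AddCommMonoid M] (n : ℕ) [NeZero n]
    (f : ZMod n → M) : ∑ t ∈ range n, f t = ∑ x, f x :=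
  sum_nbij' (↑) val (by simp) (by simp [val_lt])
    (fun _ ht => val_cast_of_lt (mem_range.mp ht)) (fun x _ => natCast_zmod_val x)
    (fun _ _ => rfl)

theorem ZMod.card_filter_intCast_mul_eq_zero (n : ℕ) [NeZero n] (k : ℤ) :
    #{u : ZMod n | (k : ZMod n) * u = 0} = Int.gcd k n := by
  have hker (u : ZMod n) : (k : ZMod n) * u = 0 ↔ u ∈ (nsmulAddMonoidHom k.natAbs).ker := by
    rw [AddMonoidHom.mem_ker, nsmulAddMonoidHom_apply, nsmul_eq_mul]
    rcases Int.natAbs_eq k with hk | hk <;> rw [hk] <;> simp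
  rw [← Fintype.card_subtype, Fintype.card_congr (Equiv.subtypeEquivRight hker),
    ← Nat.card_eq_fintype_card, IsAddCyclic.card_nsmulAddMonoidHom_ker, Nat.card_zmod,
    Nat.gcd_comm]
  rfl

namespace AddChar

theorem zmodChar_intCast {K : Type*} [Field K] {n : ℕ} [NeZero n] {ω : K}
    (hω : ω ^ n = 1) (m : ℤ) : zmodChar n hω m = ω ^ m := by
  have h0 : ω ≠ 0 := fun h => by simp [h, NeZero.ne n] at hω
  have hu : Units.mk0 ω h0 ^ n = 1 := Units.ext (by simpa using hω)
  rw [zmodChar_apply, ← zpow_natCast, ZMod.val_intCast]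
  simpa using congrArg Units.val (zpow_eq_zpow_emod' m hu).symm

variable {R K : Type*} [CommRing R] [Fintype R] [DecidableEq R] [RCLike K]
  {ψ : AddChar R K}

theorem sum_apply_mul_sq_mul_conj (hψ : ψ.IsPrimitive) (h2 : IsUnit (2 : R)) (a : R) :
    (∑ x, ψ (a * x ^ 2)) * starRingEnd K (∑ x, ψ (a * x ^ 2)) =
      Fintype.card R * #{u | a * u = 0} := by
  have hshift (y u : R) :
      ψ (a * (u + y) ^ 2) * ψ (-(a * y ^ 2)) = ψ (a * u ^ 2) * ψ (y * (2 * a * u)) := by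
    rw [← map_add_eq_mul, ← map_add_eq_mul]
    ring_nf
  have hinner (u : R) : ψ (a * u ^ 2) * ∑ y, ψ (y * (2 * a * u)) =
      if a * u = 0 then (Fintype.card R : K) else 0 := by
    simp only [sum_mulShift _ hψ, mul_assoc, h2.mul_right_eq_zero]
    split_ifs with h
    · simp [sq, ← mul_assoc, h]
    · simp
  calc (∑ x, ψ (a * x ^ 2)) * starRingEnd K (∑ x, ψ (a * x ^ 2))
      = ∑ y, ∑ x, ψ (a * x ^ 2) * ψ (-(a * y ^ 2)) := by
        simp_rw [map_sum, ← map_neg_eq_conj, sum_mul_sum]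
        exact sum_comm
    _ = ∑ u, ψ (a * u ^ 2) * ∑ y, ψ (y * (2 * a * u)) := by
        simp only [mul_sum]
        conv_rhs => rw [sum_comm]
        refine sum_congr rfl fun y _ => ?_
        rw [← Equiv.sum_comp (Equiv.addRight y)]
        simp only [Equiv.coe_addRight, hshift]
    _ = Fintype.card R * #{u | a * u = 0} := by
        simp_rw [hinner]
        rw [sum_ite, sum_const_zero, add_zero, sum_const, nsmul_eq_mul, mul_comm]

theorem norm_sum_apply_mul_sq_sq (hψ : ψ.IsPrimitive) (h2 : IsUnit (2 : R)) (a : R) :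
    ‖∑ x, ψ (a * x ^ 2)‖ ^ 2 = Fintype.card R * #{u | a * u = 0} := by
  have h := sum_apply_mul_sq_mul_conj hψ h2 a
  rw [RCLike.mul_conj] at h
  exact_mod_cast h

end AddChar

theorem stmt_2_general (n : ℕ) (hn : Odd n) (k : ℤ)
    (ζ : ℂ) (hζ : ζ = Complex.exp (Real.pi * Complex.I / n)) :
    ‖∑ t ∈ Finset.range n, (-ζ) ^ (k * (t : ℤ) ^ 2)‖ =
      Real.sqrt ((Int.gcd k n : ℝ) * n) := by
  have : NeZero n := ⟨hn.pos.ne'⟩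
  have hprim : IsPrimitiveRoot (-ζ) n := by
    refine IsPrimitiveRoot.neg_of_odd hn ?_
    convert Complex.isPrimitiveRoot_exp (2 * n) (mul_ne_zero two_ne_zero (NeZero.ne n)) using 2
    rw [hζ]
    push_cast
    field_simp
  set ψ := AddChar.zmodChar n hprim.pow_eq_one
  have hsum : ∑ t ∈ range n, (-ζ) ^ (k * (t : ℤ) ^ 2) = ∑ x, ψ (k * x ^ 2) := by
    rw [← ZMod.sum_range_natCast]
    refine sum_congr rfl fun t _ => ?_
    rw [← AddChar.zmodChar_intCast hprim.pow_eq_one]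
    push_cast
    rfl
  have h2 : IsUnit (2 : ZMod n) := by
    exact_mod_cast (ZMod.isUnit_iff_coprime 2 n).mpr (Nat.coprime_two_left.mpr hn)
  rw [hsum, ← Real.sqrt_sq (norm_nonneg _),
    AddChar.norm_sum_apply_mul_sq_sq (AddChar.zmodChar_primitive_of_primitive_root n hprim) h2,
    ZMod.card, ZMod.card_filter_intCast_mul_eq_zero, mul_comm]

/-- For `n` odd and `ζ = e^{πi/n}` (a primitive `n`-th root of `-1`), for every integer `k`,
`|∑_{t=0}^{n-1} (-ζ)^{k t²}| = √(gcd(k,n)·n)`. -/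
theorem stmt_2 (n : ℕ) (hn : Odd n) (hpos : 0 < n) (k : ℤ)
    (ζ : ℂ) (hζ : ζ = Complex.exp (Real.pi * Complex.I / n)) :
    ‖∑ t ∈ Finset.range n, (-ζ) ^ (k * (t : ℤ) ^ 2)‖ =
      Real.sqrt ((Int.gcd k n : ℝ) * n) :=
  stmt_2_general n hn k ζ hζ
end

section
/- Let A, B ∈ SL(2,ℂ) with Trace(ABA^{-1}B^{-1}) = 2. Then the subgroup of SL(2,ℂ) generated by A and B is not a free group of rank two on the generators A and B. -/
/-!
Put `N = AB - BA`. For `A ∈ SL(2, R)` Cayley–Hamilton gives `A N A = N`, hence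
`[A, B] = 1 + A B N`, and taking determinants gives `det N = 2 - tr [A, B]`. When this trace
is `2`, `N` has rank at most one, so `N X N = tr (X N) • N` for every `X`. Since
`[A⁻¹, B] = 1 - A⁻¹ B N` and both `A B N` and `A⁻¹ B N` are traceless, their products vanish:
`[A, B]` and `[A⁻¹, B]` commute, which they do not in the free group on `A` and `B`.
-/

namespace Matrix

variable {R : Type*} [CommRing R]

theorem mul_self_eq_trace_smul_sub_det_smul_fin_two (A : Matrix (Fin 2) (Fin 2) R) :
    A * A = A.trace • A - A.det • 1 := by
  ext i j
  fin_cases i <;> fin_cases j <;> simp [mul_apply, trace_fin_two, det_fin_two] <;> ring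

theorem mul_lie_mul_self_of_det_eq_one {A : Matrix (Fin 2) (Fin 2) R} (hA : A.det = 1)
    (B : Matrix (Fin 2) (Fin 2) R) :
    A * (A * B - B * A) * A = A * B - B * A := by
  have hsq := mul_self_eq_trace_smul_sub_det_smul_fin_two A
  rw [hA, one_smul] at hsq
  calc A * (A * B - B * A) * A = A * A * B * A - A * B * (A * A) := by noncomm_ring
    _ = A * B - B * A := by
      simp only [hsq, sub_mul, mul_sub, smul_mul_assoc, mul_smul_comm, Matrix.one_mul,
        Matrix.mul_one, Matrix.mul_assoc]
      abel

theorem adjugate_eq_trace_smul_sub_fin_two (A : Matrix (Fin 2) (Fin 2) R) :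
    adjugate A = A.trace • 1 - A := by
  ext i j
  fin_cases i <;> fin_cases j <;> simp [adjugate_fin_two, trace_fin_two]

theorem adjugate_mul_sub_mul_adjugate_fin_two (A B : Matrix (Fin 2) (Fin 2) R) :
    adjugate A * B - B * adjugate A = -(A * B - B * A) := by
  simp only [adjugate_eq_trace_smul_sub_fin_two, sub_mul, mul_sub, smul_mul_assoc, mul_smul_comm,
    Matrix.one_mul, Matrix.mul_one]
  abel

theorem det_one_add_fin_two (A : Matrix (Fin 2) (Fin 2) R) :
    (1 + A).det = 1 + A.trace + A.det := by
  simp [det_fin_two, trace_fin_two]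
  ring

theorem mul_mul_eq_trace_mul_smul_of_det_eq_zero {N : Matrix (Fin 2) (Fin 2) R}
    (hN : N.det = 0) (M : Matrix (Fin 2) (Fin 2) R) : N * M * N = (M * N).trace • N := by
  rw [det_fin_two] at hN
  ext i j
  fin_cases i <;> fin_cases j <;> simp [mul_apply, trace_fin_two]
  · linear_combination -M 1 1 * hN
  · linear_combination M 0 1 * hN
  · linear_combination M 1 0 * hN
  · linear_combination -M 0 0 * hN

theorem commute_one_add_mul_one_sub_mul_of_det_eq_zero {N X Y : Matrix (Fin 2) (Fin 2) R}
    (hN : N.det = 0) (hX : (X * N).trace = 0) (hY : (Y * N).trace = 0) :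
    Commute (1 + X * N) (1 - Y * N) := by
  have hXY : X * N * (Y * N) = 0 := by
    rw [Matrix.mul_assoc X, ← Matrix.mul_assoc N, mul_mul_eq_trace_mul_smul_of_det_eq_zero hN, hY,
      zero_smul, Matrix.mul_zero]
  have hYX : Y * N * (X * N) = 0 := by
    rw [Matrix.mul_assoc Y, ← Matrix.mul_assoc N, mul_mul_eq_trace_mul_smul_of_det_eq_zero hN, hX,
      zero_smul, Matrix.mul_zero]
  simp only [commute_iff_eq, add_mul, mul_add, sub_mul, mul_sub, Matrix.one_mul, Matrix.mul_one,
    hXY, hYX]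
  abel

namespace SpecialLinearGroup

open scoped MatrixGroups

local notation:1024 "↑ₘ" A:1024 => ((A : SL(2, R)) : Matrix (Fin 2) (Fin 2) R)

theorem coe_commutator_eq_one_add_mul_lie (A B : SL(2, R)) :
    ↑ₘ(A * B * A⁻¹ * B⁻¹) = 1 + ↑ₘA * ↑ₘB * (↑ₘA * ↑ₘB - ↑ₘB * ↑ₘA) := by
  set N := ↑ₘA * ↑ₘB - ↑ₘB * ↑ₘA
  have hA : ↑ₘA * ↑ₘA⁻¹ = 1 := by rw [← coe_mul, mul_inv_cancel, coe_one]
  have hB : ↑ₘB * ↑ₘB⁻¹ = 1 := by rw [← coe_mul, mul_inv_cancel, coe_one]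
  have hNA : N * ↑ₘA⁻¹ = ↑ₘA * N := by
    have hANA : ↑ₘA * N * ↑ₘA = N := mul_lie_mul_self_of_det_eq_one A.det_coe _
    conv_lhs => rw [← hANA, Matrix.mul_assoc _ ↑ₘA, hA, Matrix.mul_one]
  have hNB : N * ↑ₘB⁻¹ = ↑ₘB * N := by
    have hBNB : ↑ₘB * N * ↑ₘB = N := by
      have := mul_lie_mul_self_of_det_eq_one B.det_coe ↑ₘA
      rwa [← neg_sub (↑ₘA * ↑ₘB), Matrix.mul_neg, Matrix.neg_mul, neg_inj] at this
    conv_lhs => rw [← hBNB, Matrix.mul_assoc _ ↑ₘB, hB, Matrix.mul_one]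
  calc ↑ₘ(A * B * A⁻¹ * B⁻¹) = 1 + N * ↑ₘA⁻¹ * ↑ₘB⁻¹ := by
        rw [sub_mul, sub_mul, Matrix.mul_assoc ↑ₘB ↑ₘA, hA, Matrix.mul_one, hB, add_sub_cancel,
          coe_mul, coe_mul, coe_mul]
    _ = 1 + ↑ₘA * ↑ₘB * N := by rw [hNA, Matrix.mul_assoc, hNB, Matrix.mul_assoc]

theorem coe_inv_mul_sub_mul_coe_inv (A : SL(2, R)) (B : Matrix (Fin 2) (Fin 2) R) :
    ↑ₘA⁻¹ * B - B * ↑ₘA⁻¹ = -(↑ₘA * B - B * ↑ₘA) := by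
  rw [coe_inv, adjugate_mul_sub_mul_adjugate_fin_two]

theorem det_lie_eq_two_sub_trace_commutator (A B : SL(2, R)) :
    (↑ₘA * ↑ₘB - ↑ₘB * ↑ₘA).det = 2 - (↑ₘ(A * B * A⁻¹ * B⁻¹)).trace := by
  have hK := coe_commutator_eq_one_add_mul_lie A B
  have hdet := det_coe (A * B * A⁻¹ * B⁻¹)
  rw [hK, det_one_add_fin_two, det_mul, det_mul, A.det_coe, B.det_coe] at hdet
  rw [hK, trace_add, trace_one, Fintype.card_fin]
  push_cast
  linear_combination hdet

theorem commute_commutator_inv_commutator_of_trace_eq_two {A B : SL(2, R)}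
    (h : (↑ₘ(A * B * A⁻¹ * B⁻¹)).trace = 2) :
    Commute (A * B * A⁻¹ * B⁻¹) (A⁻¹ * B * A * B⁻¹) := by
  set N := ↑ₘA * ↑ₘB - ↑ₘB * ↑ₘA
  have hN : N.det = 0 := by rw [det_lie_eq_two_sub_trace_commutator, h, sub_self]
  have hN_inv : ↑ₘA⁻¹ * ↑ₘB - ↑ₘB * ↑ₘA⁻¹ = -N := coe_inv_mul_sub_mul_coe_inv A B
  have hK := coe_commutator_eq_one_add_mul_lie A B
  have hK' : ↑ₘ(A⁻¹ * B * A * B⁻¹) = 1 - ↑ₘA⁻¹ * ↑ₘB * N := by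
    have := coe_commutator_eq_one_add_mul_lie A⁻¹ B
    rwa [inv_inv, hN_inv, Matrix.mul_neg, ← sub_eq_add_neg] at this
  have h' : (↑ₘ(A⁻¹ * B * A * B⁻¹)).trace = 2 := by
    have := det_lie_eq_two_sub_trace_commutator A⁻¹ B
    rw [inv_inv, hN_inv, det_neg, hN] at this
    linear_combination this
  have hP : (↑ₘA * ↑ₘB * N).trace = 0 := by
    rw [hK, trace_add, trace_one, Fintype.card_fin] at h
    push_cast at h
    linear_combination h
  have hQ : (↑ₘA⁻¹ * ↑ₘB * N).trace = 0 := by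
    rw [hK', trace_sub, trace_one, Fintype.card_fin] at h'
    push_cast at h'
    linear_combination -h'
  rw [commute_iff_eq]
  apply Subtype.ext
  rw [coe_mul (A * B * A⁻¹ * B⁻¹), coe_mul (A⁻¹ * B * A * B⁻¹), hK, hK']
  exact (commute_one_add_mul_one_sub_mul_of_det_eq_zero hN hP hQ).eq

end SpecialLinearGroup

end Matrix

namespace FreeGroup

theorem not_commute_commutator_inv_commutator :
    ¬ Commute (of 0 * of 1 * (of 0)⁻¹ * (of 1)⁻¹ : FreeGroup (Fin 2))
      ((of 0)⁻¹ * of 1 * of 0 * (of 1)⁻¹) := by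
  rw [commute_iff_eq]
  decide

theorem not_injective_lift_of_commute {G : Type*} [Group G] {a b : G}
    (h : Commute (a * b * a⁻¹ * b⁻¹) (a⁻¹ * b * a * b⁻¹)) :
    ¬ Function.Injective (lift ![a, b]) := fun hinj =>
  not_commute_commutator_inv_commutator (Commute.of_map hinj (by simpa using h))

end FreeGroup

open Matrix

/-- If `A, B ∈ SL(2,ℂ)` and `Trace(ABA⁻¹B⁻¹) = 2`, then the subgroup generated by `A, B`
is not free of rank two on the generators `A, B`: the canonical map from the free group
on two generators sending the generators to `A` and `B` is not injective. -/
theorem stmt_5 (A B : Matrix.SpecialLinearGroup (Fin 2) ℂ)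
    (h : Matrix.trace ((A * B * A⁻¹ * B⁻¹ : Matrix.SpecialLinearGroup (Fin 2) ℂ) :
        Matrix (Fin 2) (Fin 2) ℂ) = 2) :
    ¬ Function.Injective
        (FreeGroup.lift (![A, B]) : FreeGroup (Fin 2) →* Matrix.SpecialLinearGroup (Fin 2) ℂ) :=
  FreeGroup.not_injective_lift_of_commute
    (SpecialLinearGroup.commute_commutator_inv_commutator_of_trace_eq_two h)
end

section
/- Let G be a subgroup of SL(2,ℂ) that is freely generated by two elements A and B. Then the ℂ-subalgebra of the 2×2 matrix algebra Mat(2,ℂ) generated by G is all of Mat(2,ℂ). -/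
/-!
If `1, A, B, AB` were linearly dependent in `Mat(2, K)`, solving the relation shows that either
`A` and `B` commute, or, after shifting both by scalars, `A' * B' = 0` with `B'` of rank one, so
that the image of `B'` is a common eigenvector of `A` and `B`. Commuting generators contradict
freeness at once. A common eigenvector `v` is fixed by the commutators `⁅A, B⁆` and `⁅A⁻¹, B⁆`,
and the stabiliser of a nonzero vector in `SL(2, K)` is abelian, so these two commutators commute,
which again contradicts freeness. Hence `1, A, B, AB` is a basis of `Mat(2, K)`, and all four
matrices lie in the algebra generated by `G`.
-/

open Matrix
open scoped commutatorElement

namespace FreeGroup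

variable {G : Type*} [Group G] {a b : G}

theorem not_commute_of_injective_lift (hf : Function.Injective (lift ![a, b])) :
    ¬Commute a b := fun h => by
  have hof : ¬Commute (of (0 : Fin 2)) (of 1) := by rw [commute_iff_eq]; decide
  exact hof (Commute.of_map hf (by simpa using h))

theorem not_commute_commutatorElement_of_injective_lift
    (hf : Function.Injective (lift ![a, b])) : ¬Commute ⁅a, b⁆ ⁅a⁻¹, b⁆ := fun h => by
  have hof : ¬Commute ⁅(of 0 : FreeGroup (Fin 2)), (of 1 : FreeGroup (Fin 2))⁆
      ⁅(of 0 : FreeGroup (Fin 2))⁻¹, (of 1 : FreeGroup (Fin 2))⁆ := by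
    simp only [commute_iff_eq, commutatorElement_def]; decide
  exact hof (Commute.of_map hf (by simpa [commutatorElement_def] using h))

end FreeGroup

theorem Commute.of_add_smul_one {K R : Type*} [Field K] [Ring R] [Algebra K R] {a b : R} {s t : K}
    (h : Commute (a + s • 1) (b + t • 1)) : Commute a b := by
  simpa using (h.sub_right ((Commute.one_right _).smul_right t)).sub_left
    ((Commute.one_left _).smul_left s)

namespace Matrix

variable {K : Type*} [Field K]

theorem mul_self_fin_two (M : Matrix (Fin 2) (Fin 2) K) : M * M = M.trace • M - M.det • 1 := by
  have h := M.aeval_self_charpoly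
  simp only [charpoly_fin_two, map_add, map_sub, Polynomial.aeval_X, Polynomial.aeval_C, map_mul,
    Algebra.algebraMap_eq_smul_one, smul_mul_assoc, one_mul, sq] at h
  rw [← sub_eq_zero, ← h]
  abel

def HasCommonEigenvector {n : Type*} [Fintype n] (A B : Matrix n n K) : Prop :=
  ∃ v ≠ 0, ∃ a b : K, A *ᵥ v = a • v ∧ B *ᵥ v = b • v

theorem HasCommonEigenvector.of_add_smul_one {n : Type*} [Fintype n] [DecidableEq n]
    {A B : Matrix n n K} {s t : K} (h : HasCommonEigenvector (A + s • 1) (B + t • 1)) :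
    HasCommonEigenvector A B := by
  obtain ⟨v, hv, a, b, hA, hB⟩ := h
  refine ⟨v, hv, a - s, b - t, ?_, ?_⟩
  · rw [add_mulVec, smul_mulVec, one_mulVec, ← eq_sub_iff_add_eq] at hA
    rw [hA, sub_smul]
  · rw [add_mulVec, smul_mulVec, one_mulVec, ← eq_sub_iff_add_eq] at hB
    rw [hB, sub_smul]

theorem hasCommonEigenvector_of_mul_eq_zero {X Y : Matrix (Fin 2) (Fin 2) K}
    (hXY : X * Y = 0) (hY : Y ≠ 0) (hdet : Y.det = 0) : HasCommonEigenvector X Y := by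
  obtain ⟨u, hu⟩ : ∃ u, Y *ᵥ u ≠ 0 := by
    by_contra! h
    exact hY (ext_of_mulVec_single fun j => by rw [h, zero_mulVec])
  refine ⟨Y *ᵥ u, hu, 0, Y.trace, ?_, ?_⟩
  · rw [mulVec_mulVec, hXY, zero_mulVec, zero_smul]
  · rw [mulVec_mulVec, mul_self_fin_two, hdet, zero_smul, sub_zero, smul_mulVec]

theorem commute_or_hasCommonEigenvector_of_mul_eq_smul_one {X Y : Matrix (Fin 2) (Fin 2) K}
    {c : K} (h : X * Y = c • 1) : Commute X Y ∨ HasCommonEigenvector X Y := by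
  by_cases hc : c = 0
  · rw [hc, zero_smul] at h
    by_cases hY : Y = 0
    · exact .inl (hY ▸ Commute.zero_right X)
    by_cases hdet : Y.det = 0
    · exact .inr (hasCommonEigenvector_of_mul_eq_zero h hY hdet)
    have hX : X = 0 := calc
      X = X * Y * Y⁻¹ := by rw [mul_assoc, mul_nonsing_inv _ (Ne.isUnit hdet), mul_one]
      _ = 0 := by rw [h, zero_mul]
    exact .inl (hX ▸ Commute.zero_left Y)
  · have hinv : (c⁻¹ • Y) * X = 1 := mul_eq_one_comm.mp <| by
      rw [mul_smul_comm, h, smul_smul, inv_mul_cancel₀ hc, one_smul]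
    refine .inl (h.trans ?_)
    rw [← hinv, smul_mul_assoc, smul_smul, mul_inv_cancel₀ hc, one_smul]

theorem commute_of_smul_one_add_smul_add_smul_eq_zero {n : Type*} [Fintype n] [DecidableEq n]
    {A B : Matrix n n K} {α β γ : K} (hγ : γ ≠ 0) (h : α • 1 + β • A + γ • B = 0) :
    Commute A B := by
  rw [add_eq_zero_iff_eq_neg'] at h
  exact (Commute.smul_right_iff₀ hγ).mp <| h ▸
    (((Commute.one_right A).smul_right α).add_right ((Commute.refl A).smul_right β)).neg_right

theorem commute_or_hasCommonEigenvector_of_not_linearIndependent {A B : Matrix (Fin 2) (Fin 2) K}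
    (h : ¬LinearIndependent K ![1, A, B, A * B]) : Commute A B ∨ HasCommonEigenvector A B := by
  obtain ⟨k, hsum, i, hi⟩ := Fintype.not_linearIndependent_iff.mp h
  simp only [Fin.sum_univ_four, cons_val_zero, cons_val_one, cons_val_two, cons_val_three,
    head_cons, tail_cons] at hsum
  by_cases hδ : k 3 = 0
  · left
    rw [hδ, zero_smul, add_zero] at hsum
    by_cases hγ : k 2 = 0
    · rw [hγ, zero_smul, add_zero] at hsum
      have hβ : k 1 ≠ 0 := by
        intro hβ
        rw [hβ, zero_smul, add_zero, smul_eq_zero, or_iff_left one_ne_zero] at hsum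
        exact hi (by fin_cases i <;> assumption)
      exact (commute_of_smul_one_add_smul_add_smul_eq_zero hβ
        (by rw [zero_smul, add_zero, hsum] : k 0 • 1 + (0 : K) • B + k 1 • A = 0)).symm
    · exact commute_of_smul_one_add_smul_add_smul_eq_zero hγ hsum
  · have key : (A + (k 2 / k 3) • 1) * (B + (k 1 / k 3) • 1)
        = (k 1 * k 2 / k 3 ^ 2 - k 0 / k 3) • 1 := by
      simp only [add_mul, mul_add, smul_mul_assoc, mul_smul_comm, one_mul, mul_one]
      linear_combination (norm := match_scalars <;> field_simp <;> ring) (k 3)⁻¹ • hsum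
    rcases commute_or_hasCommonEigenvector_of_mul_eq_smul_one key with hc | he
    · exact .inl (Commute.of_add_smul_one hc)
    · exact .inr he.of_add_smul_one

/-- The stabiliser of `v` consists of transvections `1 + v ⊗ φ` with `φ v = 0`, and these
commute; entrywise this is a polynomial identity once a nonzero coordinate of `v` is chosen. -/
theorem commute_of_det_eq_one_of_mulVec_eq_self {M N : Matrix (Fin 2) (Fin 2) K} {v : Fin 2 → K}
    (hv : v ≠ 0) (hM : M.det = 1) (hN : N.det = 1) (hMv : M *ᵥ v = v) (hNv : N *ᵥ v = v) :
    Commute M N := by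
  have hcoord : v 0 ≠ 0 ∨ v 1 ≠ 0 := by
    by_contra! h
    exact hv (funext fun i => by fin_cases i <;> simp [h])
  rw [det_fin_two] at hM hN
  have hMv0 := congrFun hMv 0
  have hMv1 := congrFun hMv 1
  have hNv0 := congrFun hNv 0
  have hNv1 := congrFun hNv 1
  simp only [mulVec, dotProduct, Fin.sum_univ_two] at hMv0 hMv1 hNv0 hNv1
  ext i j
  fin_cases i <;> fin_cases j <;> simp only [mul_apply, Fin.sum_univ_two] <;> grind

theorem adjoin_eq_top_of_linearIndependent {A B : Matrix (Fin 2) (Fin 2) K}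
    (h : LinearIndependent K ![1, A, B, A * B]) : Algebra.adjoin K {A, B} = ⊤ := by
  have hA : A ∈ Algebra.adjoin K {A, B} := Algebra.subset_adjoin (by simp)
  have hB : B ∈ Algebra.adjoin K {A, B} := Algebra.subset_adjoin (by simp)
  refine Algebra.toSubmodule_eq_top.mp (eq_top_iff.mpr ?_)
  rw [← h.span_eq_top_of_card_eq_finrank (by simp [Module.finrank_matrix]), Submodule.span_le]
  rintro _ ⟨i, rfl⟩
  fin_cases i
  exacts [Subalgebra.one_mem _, hA, hB, Subalgebra.mul_mem _ hA hB]

namespace SpecialLinearGroup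

section

variable {n : Type*} [Fintype n] [DecidableEq n] {v : n → K} {a b : K}

theorem ne_zero_of_mulVec_eq_smul (g : SpecialLinearGroup n K) (hv : v ≠ 0)
    (h : (g : Matrix n n K) *ᵥ v = a • v) : a ≠ 0 := by
  rintro rfl
  apply hv
  rw [← one_mulVec v, ← coe_one, ← inv_mul_cancel g, coe_mul, ← mulVec_mulVec, h, zero_smul,
    mulVec_zero]

theorem inv_mulVec_of_mulVec_eq_smul (g : SpecialLinearGroup n K) (hv : v ≠ 0)
    (h : (g : Matrix n n K) *ᵥ v = a • v) :
    ((g⁻¹ : SpecialLinearGroup n K) : Matrix n n K) *ᵥ v = a⁻¹ • v := by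
  rw [eq_inv_smul_iff₀ (ne_zero_of_mulVec_eq_smul g hv h), ← mulVec_smul, ← h, mulVec_mulVec,
    ← coe_mul, inv_mul_cancel, coe_one, one_mulVec]

theorem commutatorElement_mulVec_eq_self (g h : SpecialLinearGroup n K) (hv : v ≠ 0)
    (hg : (g : Matrix n n K) *ᵥ v = a • v) (hh : (h : Matrix n n K) *ᵥ v = b • v) :
    ((⁅g, h⁆ : SpecialLinearGroup n K) : Matrix n n K) *ᵥ v = v := by
  have ha := ne_zero_of_mulVec_eq_smul g hv hg
  have hb := ne_zero_of_mulVec_eq_smul h hv hh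
  simp only [commutatorElement_def, coe_mul, ← mulVec_mulVec, inv_mulVec_of_mulVec_eq_smul h hv hh,
    inv_mulVec_of_mulVec_eq_smul g hv hg, mulVec_smul, hg, hh, smul_smul]
  rw [show b⁻¹ * (a⁻¹ * (b * a)) = 1 by field_simp, one_smul]

end

theorem commute_commutatorElement_of_hasCommonEigenvector {A B : SpecialLinearGroup (Fin 2) K}
    (h : HasCommonEigenvector (A : Matrix (Fin 2) (Fin 2) K) B) : Commute ⁅A, B⁆ ⁅A⁻¹, B⁆ := by
  obtain ⟨v, hv, a, b, hA, hB⟩ := h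
  have hC := commutatorElement_mulVec_eq_self A B hv hA hB
  have hD := commutatorElement_mulVec_eq_self A⁻¹ B hv (inv_mulVec_of_mulVec_eq_smul A hv hA) hB
  exact Subtype.ext (commute_of_det_eq_one_of_mulVec_eq_self hv (det_coe _) (det_coe _) hC hD).eq

theorem linearIndependent_of_injective_lift {A B : SpecialLinearGroup (Fin 2) K}
    (hf : Function.Injective (FreeGroup.lift ![A, B])) :
    LinearIndependent K ![1, (A : Matrix (Fin 2) (Fin 2) K), B, A * B] := by
  by_contra h
  rcases commute_or_hasCommonEigenvector_of_not_linearIndependent h with hc | he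
  · exact FreeGroup.not_commute_of_injective_lift hf (Subtype.ext hc.eq)
  · exact FreeGroup.not_commute_commutatorElement_of_injective_lift hf
      (commute_commutatorElement_of_hasCommonEigenvector he)

end SpecialLinearGroup

end Matrix

/-- If a subgroup `G` of `SL(2,ℂ)` is freely generated by two elements `A, B`, then the
`ℂ`-subalgebra of `Mat(2,ℂ)` generated by (the matrices underlying) `G` is all of `Mat(2,ℂ)`. -/
theorem stmt_6 (A B : Matrix.SpecialLinearGroup (Fin 2) ℂ)
    (G : Subgroup (Matrix.SpecialLinearGroup (Fin 2) ℂ))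
    (hG : G = Subgroup.closure {A, B})
    (hfree : Function.Injective
      (FreeGroup.lift (![A, B]) : FreeGroup (Fin 2) →* Matrix.SpecialLinearGroup (Fin 2) ℂ)) :
    Algebra.adjoin ℂ
        ((fun g : Matrix.SpecialLinearGroup (Fin 2) ℂ => (g : Matrix (Fin 2) (Fin 2) ℂ)) ''
          (G : Set (Matrix.SpecialLinearGroup (Fin 2) ℂ))) = ⊤ := by
  have hsub : {(A : Matrix (Fin 2) (Fin 2) ℂ), (B : Matrix (Fin 2) (Fin 2) ℂ)} ⊆
      (fun g : Matrix.SpecialLinearGroup (Fin 2) ℂ => (g : Matrix (Fin 2) (Fin 2) ℂ)) '' G := by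
    rw [hG, Set.insert_subset_iff, Set.singleton_subset_iff]
    exact ⟨⟨A, Subgroup.subset_closure (by simp), rfl⟩, ⟨B, Subgroup.subset_closure (by simp), rfl⟩⟩
  have htop := Matrix.adjoin_eq_top_of_linearIndependent
    (Matrix.SpecialLinearGroup.linearIndependent_of_injective_lift hfree)
  exact top_unique (htop.ge.trans (Algebra.adjoin_mono hsub))
end

section
/- Let n be an odd positive integer, q a primitive n-th root of unity, and define operators X, Y on ℂ^n with basis e₀,…,e_{n−1} by X e_i = q^i e_i and Y e_i = e_{i+1} (indices mod n). Let V₁ = span⟨e₀, e₁+e_{n−1}, e₂+e_{n−2}, …, e_{(n−1)/2}+e_{(n+1)/2}⟩ and V₂ = span⟨e₁−e_{n−1}, e₂−e_{n−2}, …, e_{(n−1)/2}−e_{(n+1)/2}⟩. Then ℂ^n = V₁ ⊕ V₂, dim V₁ = (n+1)/2, dim V₂ = (n−1)/2, and both V₁ and V₂ are invariant under the subalgebra of End(ℂ^n) spanned by the elements X^aY^b + X^{-a}Y^{-b} for (a,b) ∈ ℤ². -/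
/-!
Let `σ` be the reflection `f ↦ f ∘ (i ↦ -i)` of `ℂⁿ`, so that `σ eᵢ = e₋ᵢ`. Then `V₁` and `V₂`
are the `±1`-eigenspaces of the involution `σ`: they are the ranges of `1 ± σ`, and the
projections `(1 ± σ)/2` split `ℂⁿ` into their direct sum. The trace of `(1 ± σ)/2` is the
dimension of its range, while the trace of `σ` is the number of fixed points of `i ↦ -i`, which
is `1` for `n` odd; this gives `2 dim V₁ = n + 1` and `2 dim V₂ = n - 1`. Finally `X σ X = σ` and
`Y σ Y = σ`, so `σ XᵃYᵇ = X⁻ᵃY⁻ᵇ σ`; hence `σ` commutes with `XᵃYᵇ + X⁻ᵃY⁻ᵇ`, which therefore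
preserves the eigenspaces of `σ`.
-/

open LinearMap Module

namespace Module.End

variable {K V : Type*} [Field K] [AddCommGroup V] [Module K V] {σ : End K V} {c : K}

theorem ker_one_add_smul_eq_eigenspace_neg (hc : c * c = 1) :
    ker (1 + c • σ) = σ.eigenspace (-c) := by
  ext x
  rw [mem_ker, mem_eigenspace_iff, LinearMap.add_apply, one_apply, LinearMap.smul_apply]
  constructor
  · intro h
    calc σ x = c • (x + c • σ x) - c • x := by rw [smul_add, smul_smul, hc, one_smul]; abel
      _ = -c • x := by rw [h, smul_zero, zero_sub, neg_smul]
  · intro h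
    rw [h, smul_smul, mul_neg, hc, neg_smul, one_smul, add_neg_cancel]

variable [NeZero (2 : K)]

theorem isProj_eigenspace_of_mul_self_eq_one (hσ : σ * σ = 1) (hc : c * c = 1) :
    IsProj (σ.eigenspace c) ((2⁻¹ : K) • (1 + c • σ)) where
  map_mem x := by
    rw [mem_eigenspace_iff]
    have hσx : σ (σ x) = x := by rw [← mul_apply, hσ, one_apply]
    simp only [LinearMap.smul_apply, LinearMap.add_apply, one_apply, map_smul, map_add, hσx,
      smul_add, smul_smul]
    rw [add_comm, mul_left_comm, hc, mul_one, mul_comm]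
  map_id x hx := by
    rw [mem_eigenspace_iff] at hx
    simp only [LinearMap.smul_apply, LinearMap.add_apply, one_apply, hx, smul_smul, hc, one_smul]
    rw [← two_smul K x, smul_smul, inv_mul_cancel₀ two_ne_zero, one_smul]

theorem isCompl_eigenspace_neg (hσ : σ * σ = 1) (hc : c * c = 1) :
    IsCompl (σ.eigenspace c) (σ.eigenspace (-c)) := by
  have h := (isProj_eigenspace_of_mul_self_eq_one hσ hc).isCompl
  rwa [ker_smul _ _ (inv_ne_zero two_ne_zero), ker_one_add_smul_eq_eigenspace_neg hc] at h

theorem range_one_add_smul_eq_eigenspace (hσ : σ * σ = 1) (hc : c * c = 1) :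
    range (1 + c • σ) = σ.eigenspace c := by
  rw [← range_smul _ _ (inv_ne_zero (two_ne_zero (α := K))),
    (isProj_eigenspace_of_mul_self_eq_one hσ hc).range]

theorem two_mul_finrank_eigenspace [FiniteDimensional K V] (hσ : σ * σ = 1) (hc : c * c = 1) :
    2 * (finrank K (σ.eigenspace c) : K) = finrank K V + c * trace K V σ := by
  rw [← (isProj_eigenspace_of_mul_self_eq_one hσ hc).trace, map_smul, map_add, map_smul,
    trace_one, smul_eq_mul, smul_eq_mul, mul_inv_cancel_left₀ two_ne_zero]

end Module.End

namespace LinearMap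

variable {K : Type*} [Field K]

theorem span_range_apply_single_one {ι M : Type*} [AddCommGroup M] [Module K M] [Finite ι]
    [DecidableEq ι] (T : (ι → K) →ₗ[K] M) :
    Submodule.span K (Set.range fun i => T (Pi.single i 1)) = range T := by
  have h := congrArg (Submodule.map T) (Pi.basisFun K ι).span_eq
  simpa only [Submodule.map_span, ← Set.range_comp, Submodule.map_top, Function.comp_def,
    Pi.basisFun_apply] using h

theorem funLeft_mul_self_of_involutive {ι : Type*} {f : ι → ι} (hf : Function.Involutive f) :
    funLeft K K f * funLeft K K f = 1 := by
  ext g i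
  simp [funLeft_apply, hf i]

theorem trace_funLeft_perm {ι : Type*} [Fintype ι] [DecidableEq ι] (e : Equiv.Perm ι) :
    trace K (ι → K) (funLeft K K e) = (Function.fixedPoints e).ncard := by
  have h : funLeft K K e = Matrix.toLin' (e.permMatrix K) := by
    refine LinearMap.ext fun v => ?_
    rw [Matrix.toLin'_apply, Matrix.permMatrix_mulVec]
    rfl
  rw [h, Matrix.trace_toLin'_eq, Matrix.trace_permutation]

variable {G : Type*} [DecidableEq G]

theorem funLeft_neg_single_one [InvolutiveNeg G] (i : G) :
    funLeft K K (fun j : G => -j) (Pi.single i 1) = Pi.single (-i) 1 := by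
  ext j
  simp [funLeft_apply, Pi.single_apply, neg_eq_iff_eq_neg]

theorem span_single_add_smul_single_neg_eq_eigenspace [NeZero (2 : K)] [InvolutiveNeg G]
    [Finite G] {c : K} (hc : c * c = 1) :
    Submodule.span K (Set.range fun i : G => (Pi.single i 1 : G → K) + c • Pi.single (-i) 1) =
      End.eigenspace (funLeft K K (fun i : G => -i)) c := by
  have h (i : G) : (Pi.single i 1 : G → K) + c • Pi.single (-i) 1 =
      (1 + c • funLeft K K (fun i : G => -i)) (Pi.single i 1) := by
    rw [LinearMap.add_apply, LinearMap.smul_apply, funLeft_neg_single_one, Module.End.one_apply]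
  simp only [h]
  rw [span_range_apply_single_one, Module.End.range_one_add_smul_eq_eigenspace
    (funLeft_mul_self_of_involutive neg_involutive) hc]

theorem mul_funLeft_neg_mul_of_apply_single_eq_add [AddCommGroup G] [Fintype G] (g : G)
    {Y : Module.End K (G → K)} (hY : ∀ i, Y (Pi.single i 1) = Pi.single (i + g) 1) :
    Y * funLeft K K (fun i : G => -i) * Y = funLeft K K (fun i : G => -i) := by
  refine (Pi.basisFun K G).ext fun i => ?_
  simp only [Pi.basisFun_apply, Module.End.mul_apply, hY, funLeft_neg_single_one, neg_add,
    neg_add_cancel_right]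

end LinearMap

theorem Units.semiconjBy_inv_of_mul_mul_eq {M : Type*} [Monoid M] {s : M} {x : Mˣ}
    (hx : x * s * x = s) : SemiconjBy s x ↑x⁻¹ := by
  rw [SemiconjBy]
  conv_rhs => rw [← hx]
  rw [mul_assoc, Units.inv_mul_cancel_left]

theorem Units.commute_zpow_mul_zpow_add_zpow_neg_mul_zpow_neg {R : Type*} [Ring R] {s : R}
    {x y : Rˣ} (hx : x * s * x = s) (hy : y * s * y = s) (a b : ℤ) :
    Commute s (↑(x ^ a * y ^ b) + ↑(x ^ (-a) * y ^ (-b))) := by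
  have key (a b : ℤ) : SemiconjBy s ↑(x ^ a * y ^ b) ↑(x ^ (-a) * y ^ (-b)) := by
    have hxa := (Units.semiconjBy_inv_of_mul_mul_eq hx).units_zpow_right a
    have hyb := (Units.semiconjBy_inv_of_mul_mul_eq hy).units_zpow_right b
    rw [inv_zpow'] at hxa hyb
    rw [Units.val_mul, Units.val_mul]
    exact hxa.mul_right hyb
  have key' := key (-a) (-b)
  rw [neg_neg, neg_neg] at key'
  simpa only [Commute, add_comm] using (key a b).add_right key'

namespace Fin

variable {n : ℕ} [NeZero n]

theorem fixedPoints_neg (hn : Odd n) : Function.fixedPoints (Equiv.neg (Fin n)) = {0} := by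
  ext i
  simp only [Function.mem_fixedPoints, Function.IsFixedPt, Equiv.neg_apply,
    Set.mem_singleton_iff]
  constructor
  · intro h
    obtain ⟨m, rfl⟩ := hn
    have hi := i.isLt
    have h2 := congrArg Fin.val (neg_eq_iff_add_eq_zero.mp h)
    rw [Fin.val_add, Fin.val_zero] at h2
    ext
    rw [Fin.val_zero]
    by_cases hlt : (i : ℕ) + i < 2 * m + 1
    · rw [Nat.mod_eq_of_lt hlt] at h2; omega
    · rw [Nat.mod_eq_sub_mod (by omega), Nat.mod_eq_of_lt (by omega)] at h2; omega
  · rintro rfl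
    exact neg_zero

theorem pow_val_add_val_neg {M : Type*} [Monoid M] {q : M} (hq : q ^ n = 1) (i : Fin n) :
    q ^ ((i : ℕ) + ((-i : Fin n) : ℕ)) = 1 := by
  have h := Fin.val_add i (-i)
  rw [add_neg_cancel, Fin.val_zero] at h
  obtain ⟨k, hk⟩ := Nat.dvd_of_mod_eq_zero h.symm
  rw [hk, pow_mul, hq, one_pow]

variable {K : Type*} [Field K]

theorem two_mul_finrank_eigenspace_funLeft_neg [NeZero (2 : K)] (hn : Odd n) {c : K}
    (hc : c * c = 1) :
    2 * (finrank K (End.eigenspace (funLeft K K (fun i : Fin n => -i)) c) : K) = n + c := by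
  have htrace : trace K _ (funLeft K K (fun i : Fin n => -i)) = 1 := by
    have h := trace_funLeft_perm (K := K) (Equiv.neg (Fin n))
    rwa [fixedPoints_neg hn, Set.ncard_singleton, Nat.cast_one] at h
  rw [Module.End.two_mul_finrank_eigenspace (funLeft_mul_self_of_involutive neg_involutive) hc,
    htrace, mul_one, Module.finrank_fin_fun]

theorem mul_funLeft_neg_mul_of_apply_single_eq_pow_smul {q : K} (hq : q ^ n = 1)
    {X : Module.End K (Fin n → K)}
    (hX : ∀ i : Fin n, X (Pi.single i 1) = q ^ (i : ℕ) • Pi.single i 1) :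
    X * funLeft K K (fun i : Fin n => -i) * X = funLeft K K (fun i : Fin n => -i) := by
  refine (Pi.basisFun K (Fin n)).ext fun i => ?_
  simp only [Pi.basisFun_apply, Module.End.mul_apply, hX, map_smul, funLeft_neg_single_one,
    smul_smul, ← pow_add, pow_val_add_val_neg hq, one_smul]

end Fin

/-- For `n` odd, `q` a primitive `n`-th root of unity, and the operators
`X eᵢ = qⁱ eᵢ`, `Y eᵢ = e_{i+1}` on `ℂⁿ`, the subspaces
`V₁ = span{eᵢ + e_{-i}}` and `V₂ = span{eᵢ - e_{-i}}` satisfy `ℂⁿ = V₁ ⊕ V₂`,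
`dim V₁ = (n+1)/2`, `dim V₂ = (n-1)/2`, and both are invariant under all operators
`XᵃYᵇ + X⁻ᵃY⁻ᵇ` for `(a,b) ∈ ℤ²`. -/
theorem stmt_11 (n : ℕ) [NeZero n] (hn : Odd n) (q : ℂ) (hq : IsPrimitiveRoot q n)
    (X Y : (Module.End ℂ (Fin n → ℂ))ˣ)
    (hX : ∀ i : Fin n, (X : Module.End ℂ (Fin n → ℂ)) (Pi.single i 1) =
      (q ^ (i : ℕ)) • (Pi.single i 1 : Fin n → ℂ))
    (hY : ∀ i : Fin n, (Y : Module.End ℂ (Fin n → ℂ)) (Pi.single i 1) =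
      (Pi.single (i + 1) 1 : Fin n → ℂ)) :
    let V₁ : Submodule ℂ (Fin n → ℂ) :=
      Submodule.span ℂ (Set.range fun i : Fin n =>
        (Pi.single i 1 : Fin n → ℂ) + Pi.single (-i) 1)
    let V₂ : Submodule ℂ (Fin n → ℂ) :=
      Submodule.span ℂ (Set.range fun i : Fin n =>
        (Pi.single i 1 : Fin n → ℂ) - Pi.single (-i) 1)
    V₁ ⊔ V₂ = ⊤ ∧ V₁ ⊓ V₂ = ⊥ ∧
      Module.finrank ℂ V₁ = (n + 1) / 2 ∧ Module.finrank ℂ V₂ = (n - 1) / 2 ∧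
      (∀ a b : ℤ, ∀ w ∈ V₁,
        ((X ^ a * Y ^ b : (Module.End ℂ (Fin n → ℂ))ˣ) : Module.End ℂ (Fin n → ℂ)) w +
          ((X ^ (-a) * Y ^ (-b) : (Module.End ℂ (Fin n → ℂ))ˣ) : Module.End ℂ (Fin n → ℂ)) w
          ∈ V₁) ∧
      (∀ a b : ℤ, ∀ w ∈ V₂,
        ((X ^ a * Y ^ b : (Module.End ℂ (Fin n → ℂ))ˣ) : Module.End ℂ (Fin n → ℂ)) w +
          ((X ^ (-a) * Y ^ (-b) : (Module.End ℂ (Fin n → ℂ))ˣ) : Module.End ℂ (Fin n → ℂ)) w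
          ∈ V₂) := by
  intro V₁ V₂
  set σ : Module.End ℂ (Fin n → ℂ) := funLeft ℂ ℂ (fun i : Fin n => -i)
  have hσ : σ * σ = 1 := funLeft_mul_self_of_involutive neg_involutive
  have hc₁ : (1 : ℂ) * 1 = 1 := mul_one 1
  have hc₂ : (-1 : ℂ) * -1 = 1 := by norm_num
  have hV₁ : V₁ = σ.eigenspace 1 := by
    simpa only [one_smul] using span_single_add_smul_single_neg_eq_eigenspace hc₁
  have hV₂ : V₂ = σ.eigenspace (-1) := by
    simpa only [neg_one_smul, ← sub_eq_add_neg] using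
      span_single_add_smul_single_neg_eq_eigenspace hc₂
  have hcompl : IsCompl V₁ V₂ := hV₁ ▸ hV₂ ▸ Module.End.isCompl_eigenspace_neg hσ hc₁
  have hdim₁ : 2 * finrank ℂ V₁ = n + 1 := by
    have h := Fin.two_mul_finrank_eigenspace_funLeft_neg hn hc₁
    rw [← hV₁] at h
    exact_mod_cast h
  have hdim₂ : 2 * finrank ℂ V₂ + 1 = n := by
    have h := Fin.two_mul_finrank_eigenspace_funLeft_neg hn hc₂
    rw [← hV₂, ← sub_eq_add_neg, eq_sub_iff_add_eq] at h
    exact_mod_cast h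
  have hcomm := Units.commute_zpow_mul_zpow_add_zpow_neg_mul_zpow_neg
    (Fin.mul_funLeft_neg_mul_of_apply_single_eq_pow_smul hq.pow_eq_one hX)
    (mul_funLeft_neg_mul_of_apply_single_eq_add 1 hY)
  refine ⟨hcompl.sup_eq_top, hcompl.inf_eq_bot, by omega, by omega, fun a b w hw => ?_,
    fun a b w hw => ?_⟩
  · rw [hV₁] at hw ⊢
    exact Module.End.mapsTo_genEigenspace_of_comm (hcomm a b) 1 1 hw
  · rw [hV₂] at hw ⊢
    exact Module.End.mapsTo_genEigenspace_of_comm (hcomm a b) (-1) 1 hw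
end

section
/- Let n be an odd positive integer and q_n = e^{2πi/n}, q_n^{1/2} = e^{πi/n}. Define the n×n matrix Λ with entries Λ_{i,k} = q_n^{k² + i² + 4ik + i − k} for 0 ≤ i,k ≤ n−1. Then |det(Λ)| = n^{n/2}, and |Trace(Λ)| = √(gcd(6,n)·n). -/
/-!
Write `q ^ m = ψ m` for the standard additive character `ψ` of `ZMod n`. The phases `q^{i² + i}`
and `q^{k² - k}` only rescale rows and columns by unimodular factors, so `|det Λ|` is the
absolute value of the determinant of the Fourier matrix `(ψ (4 i k))`, which is `√n` times a
unitary matrix because `4` is invertible modulo the odd number `n`. The trace is the quadratic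
Gauss sum `S = ∑ ψ (6 x²)`; expanding `|S|² = ∑_{x,y} ψ (6 (x² - y²))` with `x = y + d` turns the
inner sum over `y` into a character sum that vanishes unless `12 d = 0`, i.e. `6 d = 0`, so
`|S|² = n · #{d | 6 d = 0} = n · gcd(6, n)`.
-/

open Finset Matrix Complex ComplexConjugate

namespace Matrix

variable {ι 𝕜 : Type*} [Fintype ι]

theorem trace_submatrix_equiv_self {κ R : Type*} [Fintype κ] [AddCommMonoid R] (e : κ ≃ ι)
    (A : Matrix ι ι R) : (A.submatrix e e).trace = A.trace :=
  e.sum_comp fun i => A i i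

variable [DecidableEq ι]

theorem norm_det_of_mul_conjTranspose_eq_smul_one {A : Matrix ι ι ℂ} {c : ℝ} (hc : 0 ≤ c)
    (hA : A * Aᴴ = (c : ℂ) • 1) : ‖A.det‖ = c ^ ((Fintype.card ι : ℝ) / 2) := by
  have hsq : ‖A.det‖ ^ 2 = c ^ Fintype.card ι := by
    have h := congr_arg det hA
    rw [det_mul, det_conjTranspose, det_smul, det_one, mul_one, star_def, mul_conj'] at h
    exact_mod_cast h
  rw [← Real.sqrt_sq (norm_nonneg _), hsq, Real.sqrt_eq_rpow, ← Real.rpow_natCast,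
    ← Real.rpow_mul hc]
  ring_nf

theorem norm_det_mul_row_column [NormedField 𝕜] {u v : ι → 𝕜} (hu : ∀ i, ‖u i‖ = 1)
    (hv : ∀ j, ‖v j‖ = 1) (A : ι → ι → 𝕜) :
    ‖(of fun i j => u i * A i j * v j).det‖ = ‖(of A).det‖ := by
  have hrow : (of fun i j => u i * A i j * v j) =
      of fun i j => u i * (of fun i j => v j * of A i j) i j := by
    ext i j
    simp only [of_apply]
    ring
  rw [hrow, det_mul_column, det_mul_row, norm_mul, norm_mul, norm_prod, norm_prod]
  simp [hu, hv]

end Matrix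

namespace AddChar

variable {R : Type*} [CommRing R] [Fintype R] [DecidableEq R] {ψ : AddChar R ℂ}

theorem mul_conjTranspose_of_mul_mul (hψ : ψ.IsPrimitive) {u : R} (hu : IsUnit u) :
    (of fun x y => ψ (u * x * y)) * (of fun x y => ψ (u * x * y))ᴴ =
      (Fintype.card R : ℂ) • 1 := by
  ext x z
  have hterm : ∀ y, ψ (u * x * y) * star (ψ (u * z * y)) = ψ (y * (u * (x - z))) := fun y => by
    rw [star_def, ← map_neg_eq_conj, ← map_add_eq_mul]
    ring_nf
  rw [Matrix.mul_apply]
  simp only [conjTranspose_apply, of_apply, hterm, sum_mulShift _ hψ, hu.mul_right_eq_zero,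
    sub_eq_zero, Matrix.smul_apply, Matrix.one_apply, smul_eq_mul, mul_ite, mul_one, mul_zero,
    Nat.cast_ite, Nat.cast_zero]

theorem norm_det_of_add_mul_add (hψ : ψ.IsPrimitive) {u : R} (hu : IsUnit u) (f g : R → R) :
    ‖(of fun x y => ψ (f x + u * x * y + g y)).det‖ =
      (Fintype.card R : ℝ) ^ ((Fintype.card R : ℝ) / 2) := by
  simp only [map_add_eq_mul]
  rw [norm_det_mul_row_column (fun _ => ψ.norm_apply _) (fun _ => ψ.norm_apply _),
    norm_det_of_mul_conjTranspose_eq_smul_one (Nat.cast_nonneg _)]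
  exact_mod_cast mul_conjTranspose_of_mul_mul hψ hu

theorem sq_norm_sum_mul_sq (hψ : ψ.IsPrimitive) (h2 : IsUnit (2 : R)) (a : R) :
    ‖∑ x, ψ (a * x ^ 2)‖ ^ 2 = Fintype.card R * #{d | a * d = 0} := by
  have hshift : ∀ d y, ψ (a * (d + y) ^ 2) * conj (ψ (a * y ^ 2)) =
      ψ (a * d ^ 2) * ψ (y * (2 * (a * d))) := fun d y => by
    rw [← map_neg_eq_conj, ← map_add_eq_mul, ← map_add_eq_mul]
    ring_nf
  have hdiag : ∀ d, ψ (a * d ^ 2) * (if 2 * (a * d) = 0 then (Fintype.card R : ℂ) else 0) =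
      if a * d = 0 then (Fintype.card R : ℂ) else 0 := fun d => by
    simp only [h2.mul_right_eq_zero]
    split_ifs with had
    · rw [sq, ← mul_assoc, had, zero_mul, map_zero_eq_one, one_mul]
    · rw [mul_zero]
  have key : ((‖∑ x, ψ (a * x ^ 2)‖ ^ 2 : ℝ) : ℂ) =
      ∑ d, if a * d = 0 then (Fintype.card R : ℂ) else 0 := calc
    _ = ∑ y, ∑ x, ψ (a * x ^ 2) * conj (ψ (a * y ^ 2)) := by
      rw [ofReal_pow, ← mul_conj', map_sum, sum_mul_sum, sum_comm]
    _ = ∑ y, ∑ d, ψ (a * (d + y) ^ 2) * conj (ψ (a * y ^ 2)) :=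
      sum_congr rfl fun y _ => (Equiv.sum_comp (Equiv.addRight y) _).symm
    _ = ∑ d, ψ (a * d ^ 2) * ∑ y, ψ (y * (2 * (a * d))) := by
      simp only [hshift, mul_sum]
      exact sum_comm
    _ = _ := by simp only [sum_mulShift _ hψ, Nat.cast_ite, Nat.cast_zero, hdiag]
  rw [sum_ite, sum_const_zero, add_zero, sum_const, nsmul_eq_mul, mul_comm] at key
  exact_mod_cast key

end AddChar

namespace ZMod

theorem card_filter_natCast_mul_eq_zero (n m : ℕ) [NeZero n] :
    #{x : ZMod n | (m : ZMod n) * x = 0} = n.gcd m := by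
  have h := IsAddCyclic.card_nsmulAddMonoidHom_ker (ZMod n) m
  rw [Nat.card_zmod, Nat.card_eq_fintype_card] at h
  rw [← h, ← Fintype.card_subtype]
  exact Fintype.card_congr (Equiv.subtypeEquivRight fun x => by simp [nsmul_eq_mul])

theorem finEquiv_apply (n : ℕ) [NeZero n] (i : Fin n) : finEquiv n i = (i : ℕ) := by
  obtain ⟨m, rfl⟩ := Nat.exists_eq_succ_of_ne_zero (NeZero.ne n)
  exact (Fin.cast_val_eq_self i).symm

theorem isUnit_two_of_odd {n : ℕ} (hn : Odd n) : IsUnit (2 : ZMod n) := by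
  exact_mod_cast (isUnit_iff_coprime 2 n).mpr (Nat.coprime_two_left.mpr hn)

theorem stdAddChar_intCast_eq_zpow (n : ℕ) [NeZero n] (m : ℤ) :
    stdAddChar (m : ZMod n) = cexp (2 * Real.pi * I / n) ^ m := by
  rw [stdAddChar_coe, ← Complex.exp_int_mul]
  ring_nf

end ZMod

/-- For `n` odd, `q = e^{2πi/n}`, the `n×n` matrix `Λ_{i,k} = q^{k² + i² + 4ik + i - k}`
satisfies `|det Λ| = n^{n/2}` and `|Trace Λ| = √(gcd(6,n)·n)`. -/
theorem stmt_14 (n : ℕ) (hn : Odd n) (hpos : 0 < n)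
    (q : ℂ) (hq : q = Complex.exp (2 * Real.pi * Complex.I / n))
    (Λ : Matrix (Fin n) (Fin n) ℂ)
    (hΛ : ∀ i k : Fin n,
      Λ i k = q ^ ((k : ℤ) ^ 2 + (i : ℤ) ^ 2 + 4 * (i : ℤ) * (k : ℤ) + (i : ℤ) - (k : ℤ))) :
    ‖Λ.det‖ = (n : ℝ) ^ ((n : ℝ) / 2) ∧
      ‖Λ.trace‖ = Real.sqrt ((Nat.gcd 6 n : ℝ) * n) := by
  have : NeZero n := ⟨hpos.ne'⟩
  set ψ : AddChar (ZMod n) ℂ := ZMod.stdAddChar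
  have hψ : ψ.IsPrimitive := ZMod.isPrimitive_stdAddChar n
  have h2 : IsUnit (2 : ZMod n) := ZMod.isUnit_two_of_odd hn
  let e : Fin n ≃ ZMod n := (ZMod.finEquiv n).toEquiv
  have hΛψ : Λ = (of fun x y => ψ ((x ^ 2 + x) + 4 * x * y + (y ^ 2 - y))).submatrix e e := by
    ext i k
    simp only [hΛ, hq, ← ZMod.stdAddChar_intCast_eq_zpow, submatrix_apply, of_apply, e,
      RingEquiv.toEquiv_eq_coe, RingEquiv.coe_toEquiv, ZMod.finEquiv_apply]
    push_cast
    ring_nf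
    rfl
  refine ⟨?_, ?_⟩
  · have h4 : IsUnit (4 : ZMod n) := by
      convert h2.pow 2
      norm_num
    rw [hΛψ, det_submatrix_equiv_self, ψ.norm_det_of_add_mul_add hψ h4, ZMod.card]
  · have htr : (of fun x y => ψ ((x ^ 2 + x) + 4 * x * y + (y ^ 2 - y))).trace =
        ∑ x : ZMod n, ψ (6 * x ^ 2) :=
      sum_congr rfl fun x _ => by rw [diag_apply, of_apply]; ring_nf
    have hker : #{x : ZMod n | 6 * x = 0} = Nat.gcd 6 n := by
      rw [Nat.gcd_comm]
      exact_mod_cast ZMod.card_filter_natCast_mul_eq_zero n 6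
    rw [hΛψ, trace_submatrix_equiv_self, htr, ← Real.sqrt_sq (norm_nonneg _),
      ψ.sq_norm_sum_mul_sq hψ h2, ZMod.card, hker, mul_comm]
end

section
/- Let A = [[a,b],[c,d]] ∈ SL(2,ℤ) and γ : ℤ² → SL(2,ℂ) the homomorphism sending (1,0) to diag(λ₁, λ₁^{-1}) and (0,1) to diag(λ₂, λ₂^{-1}). Then Trace(γ((k₁,k₂)·A)) = Trace(γ(k₁,k₂)) for all (k₁,k₂) ∈ ℤ² if and only if (λ₁^{a−1}λ₂^{b} = 1 and λ₁^{c}λ₂^{d−1} = 1) or (λ₁^{a+1}λ₂^{b} = 1 and λ₁^{c}λ₂^{d+1} = 1). -/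
lemma key15 (z w : ℂ) (hz : z ≠ 0) (hw : w ≠ 0) :
    z + z⁻¹ = w + w⁻¹ ↔ z = w ∨ z = w⁻¹ := by
  constructor
  · intro h
    have h' : (z - w) * (z * w - 1) = 0 := by
      field_simp at h
      linear_combination h
    rcases mul_eq_zero.1 h' with h1 | h1
    · exact Or.inl (sub_eq_zero.1 h1)
    · exact Or.inr (eq_inv_of_mul_eq_one_right (by linear_combination h1))
  · rintro (rfl | rfl)
    · rfl
    · rw [inv_inv]; ring

lemma expand15 (l₁ l₂ : ℂ) (a b c d k₁ k₂ : ℤ) (h₁ : l₁ ≠ 0) (h₂ : l₂ ≠ 0) :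
    l₁ ^ (k₁ * a + k₂ * c) * l₂ ^ (k₁ * b + k₂ * d) =
      (l₁ ^ a * l₂ ^ b) ^ k₁ * (l₁ ^ c * l₂ ^ d) ^ k₂ := by
  rw [mul_zpow, mul_zpow, ← zpow_mul, ← zpow_mul, ← zpow_mul, ← zpow_mul,
    zpow_add₀ h₁, zpow_add₀ h₂, mul_comm a k₁, mul_comm c k₂, mul_comm b k₁, mul_comm d k₂]
  ring

/-- For `[[a,b],[c,d]] ∈ SL(2,ℤ)` and `λ₁, λ₂ ∈ ℂ×`, the diagonal character
`γ(k₁,k₂) = diag(λ₁^{k₁}λ₂^{k₂}, λ₁^{-k₁}λ₂^{-k₂})` has `A`-invariant trace,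
i.e. `Trace γ((k₁,k₂)·A) = Trace γ(k₁,k₂)` for all `(k₁,k₂)`, iff
`(λ₁^{a-1}λ₂^b = 1 ∧ λ₁^c λ₂^{d-1} = 1)` or `(λ₁^{a+1}λ₂^b = 1 ∧ λ₁^c λ₂^{d+1} = 1)`. -/
theorem stmt_15 (a b c d : ℤ) (hA : a * d - b * c = 1) (l₁ l₂ : ℂ)
    (h₁ : l₁ ≠ 0) (h₂ : l₂ ≠ 0) :
    (∀ k₁ k₂ : ℤ,
        l₁ ^ (k₁ * a + k₂ * c) * l₂ ^ (k₁ * b + k₂ * d) +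
          (l₁ ^ (k₁ * a + k₂ * c) * l₂ ^ (k₁ * b + k₂ * d))⁻¹ =
        l₁ ^ k₁ * l₂ ^ k₂ + (l₁ ^ k₁ * l₂ ^ k₂)⁻¹) ↔
      ((l₁ ^ (a - 1) * l₂ ^ b = 1 ∧ l₁ ^ c * l₂ ^ (d - 1) = 1) ∨
        (l₁ ^ (a + 1) * l₂ ^ b = 1 ∧ l₁ ^ c * l₂ ^ (d + 1) = 1)) := by
  have hune : l₁ ^ a * l₂ ^ b ≠ 0 := mul_ne_zero (zpow_ne_zero _ h₁) (zpow_ne_zero _ h₂)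
  have hvne : l₁ ^ c * l₂ ^ d ≠ 0 := mul_ne_zero (zpow_ne_zero _ h₁) (zpow_ne_zero _ h₂)
  have e1 : l₁ ^ (a - 1) * l₂ ^ b = (l₁ ^ a * l₂ ^ b) * l₁⁻¹ := by
    rw [zpow_sub_one₀ h₁]; ring
  have e2 : l₁ ^ c * l₂ ^ (d - 1) = (l₁ ^ c * l₂ ^ d) * l₂⁻¹ := by
    rw [zpow_sub_one₀ h₂]; ring
  have e3 : l₁ ^ (a + 1) * l₂ ^ b = (l₁ ^ a * l₂ ^ b) * l₁ := by
    rw [zpow_add_one₀ h₁]; ring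
  have e4 : l₁ ^ c * l₂ ^ (d + 1) = (l₁ ^ c * l₂ ^ d) * l₂ := by
    rw [zpow_add_one₀ h₂]; ring
  rw [e1, e2, e3, e4]
  constructor
  · intro h
    have ha : l₁ ^ a * l₂ ^ b = l₁ ∨ l₁ ^ a * l₂ ^ b = l₁⁻¹ := by
      have := h 1 0
      rw [expand15 l₁ l₂ a b c d 1 0 h₁ h₂] at this
      simp only [zpow_one, zpow_zero, mul_one] at this
      exact (key15 _ _ hune h₁).1 this
    have hb : l₁ ^ c * l₂ ^ d = l₂ ∨ l₁ ^ c * l₂ ^ d = l₂⁻¹ := by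
      have := h 0 1
      rw [expand15 l₁ l₂ a b c d 0 1 h₁ h₂] at this
      simp only [zpow_one, zpow_zero, one_mul] at this
      exact (key15 _ _ hvne h₂).1 this
    have hc : (l₁ ^ a * l₂ ^ b) * (l₁ ^ c * l₂ ^ d) = l₁ * l₂ ∨
        (l₁ ^ a * l₂ ^ b) * (l₁ ^ c * l₂ ^ d) = (l₁ * l₂)⁻¹ := by
      have := h 1 1
      rw [expand15 l₁ l₂ a b c d 1 1 h₁ h₂] at this
      simp only [zpow_one] at this
      exact (key15 _ _ (mul_ne_zero hune hvne) (mul_ne_zero h₁ h₂)).1 this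
    rcases ha with ha | ha <;> rcases hb with hb | hb
    · exact Or.inl ⟨by rw [ha, mul_inv_cancel₀ h₁], by rw [hb, mul_inv_cancel₀ h₂]⟩
    · rcases hc with hc | hc
      · have hy : l₂⁻¹ = l₂ := mul_left_cancel₀ h₁ (by rw [ha, hb] at hc; exact hc)
        have hb' : l₁ ^ c * l₂ ^ d = l₂ := hb.trans hy
        exact Or.inl ⟨by rw [ha, mul_inv_cancel₀ h₁], by rw [hb', mul_inv_cancel₀ h₂]⟩
      · have hx : l₁ = l₁⁻¹ := by
          rw [ha, hb, mul_inv] at hc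
          exact mul_right_cancel₀ (inv_ne_zero h₂) hc
        have ha' : l₁ ^ a * l₂ ^ b = l₁⁻¹ := ha.trans hx
        exact Or.inr ⟨by rw [ha', inv_mul_cancel₀ h₁], by rw [hb, inv_mul_cancel₀ h₂]⟩
    · rcases hc with hc | hc
      · have hy : l₁⁻¹ = l₁ := mul_right_cancel₀ h₂ (by rw [ha, hb] at hc; exact hc)
        have ha' : l₁ ^ a * l₂ ^ b = l₁ := ha.trans hy
        exact Or.inl ⟨by rw [ha', mul_inv_cancel₀ h₁], by rw [hb, mul_inv_cancel₀ h₂]⟩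
      · have hy : l₂ = l₂⁻¹ := by
          rw [ha, hb, mul_inv] at hc
          exact mul_left_cancel₀ (inv_ne_zero h₁) hc
        have hb' : l₁ ^ c * l₂ ^ d = l₂⁻¹ := hb.trans hy
        exact Or.inr ⟨by rw [ha, inv_mul_cancel₀ h₁], by rw [hb', inv_mul_cancel₀ h₂]⟩
    · exact Or.inr ⟨by rw [ha, inv_mul_cancel₀ h₁], by rw [hb, inv_mul_cancel₀ h₂]⟩
  · intro h k₁ k₂
    rw [expand15 l₁ l₂ a b c d k₁ k₂ h₁ h₂]
    rcases h with ⟨p, q⟩ | ⟨p, q⟩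
    · have hu' : l₁ ^ a * l₂ ^ b = l₁ := by field_simp at p; exact p
      have hv' : l₁ ^ c * l₂ ^ d = l₂ := by field_simp at q; exact q
      rw [hu', hv']
    · have hu' : l₁ ^ a * l₂ ^ b = l₁⁻¹ := eq_inv_of_mul_eq_one_left p
      have hv' : l₁ ^ c * l₂ ^ d = l₂⁻¹ := eq_inv_of_mul_eq_one_left q
      rw [hu', hv', inv_zpow, inv_zpow, ← mul_inv, inv_inv]
      ring
end
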